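/- Let D be an invertible multiplication operator on L^p(X,μ), 1 ≤ p < ∞, and let A be a bounded operator on L^p(X,μ). Then ‖A‖² ≤ ‖AD‖·‖AD⁻¹‖. -/

import Mathlib

/-!
Interpolate between `A ∘ D⁻¹` and `A ∘ D` along the analytic family `z ↦ A (|d|^z f)`.
On the line `re z = ±1` the multiplier `|d|^z` is `d^{±1}` times a unimodular function, so
there `‖A (|d|^z f)‖ ≤ ‖A ∘ D^{±1}‖ ‖f‖`; at `z = 0` the family is `A f`, and Hadamard's
three-lines theorem on the strip `-1 ≤ re z ≤ 1` gives `‖A f‖ ≤ ‖A D⁻¹‖^{1/2} ‖A D‖^{1/2} ‖f‖`.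
-/

open MeasureTheory ENNReal Complex Filter Topology

lemma norm_cexp_mul_ofReal_le {z : ℂ} {t Λ : ℝ} (ht : |t| ≤ Λ) :
    ‖cexp (z * t)‖ ≤ Real.exp (|z.re| * Λ) := by
  rw [norm_exp, re_mul_ofReal, Real.exp_le_exp]
  calc z.re * t ≤ |z.re * t| := le_abs_self _
    _ = |z.re| * |t| := abs_mul _ _
    _ ≤ |z.re| * Λ := mul_le_mul_of_nonneg_left ht (abs_nonneg _)

lemma norm_cexp_mul_ofReal_sub_sub_le {z w : ℂ} {t : ℝ} (h : |t| * ‖w - z‖ ≤ 1) :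
    ‖cexp (w * t) - cexp (z * t) - (w - z) * (t * cexp (z * t))‖ ≤
      ‖cexp (z * t)‖ * (|t| * ‖w - z‖) ^ 2 := by
  have hnorm : ‖(w - z) * t‖ = |t| * ‖w - z‖ := by
    rw [norm_mul, norm_real, Real.norm_eq_abs, mul_comm]
  have hsplit : cexp (w * t) - cexp (z * t) - (w - z) * (t * cexp (z * t)) =
      cexp (z * t) * (cexp ((w - z) * t) - 1 - (w - z) * t) := by
    rw [mul_sub, mul_sub, ← Complex.exp_add]; ring_nf
  rw [hsplit, norm_mul, ← hnorm]
  exact mul_le_mul_of_nonneg_left (norm_exp_sub_one_sub_id_le (hnorm ▸ h)) (norm_nonneg _)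

lemma cexp_mul_log_norm (c z : ℂ) :
    cexp (z * Real.log ‖c‖) =
      cexp (z.re * log c) * cexp ((z.im * Real.log ‖c‖ - z.re * arg c : ℝ) * I) := by
  rw [← Complex.exp_add]
  congr 1
  apply Complex.ext <;> simp [log_re, log_im]

lemma hasDerivAt_of_norm_sub_le_sq {𝕜 E : Type*} [NontriviallyNormedField 𝕜]
    [NormedAddCommGroup E] [NormedSpace 𝕜 E] {F : 𝕜 → E} {F' : E} {z : 𝕜} (c : ℝ)
    (h : ∀ᶠ w in 𝓝 z, ‖F w - F z - (w - z) • F'‖ ≤ c * ‖w - z‖ ^ 2) :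
    HasDerivAt F F' z := by
  rw [hasDerivAt_iff_isLittleO]
  refine (Asymptotics.IsBigO.of_bound c (h.mono fun w hw => ?_)).trans_isLittleO
    (Asymptotics.isLittleO_pow_sub_sub z one_lt_two)
  rwa [norm_pow, norm_norm]

open HadamardThreeLines in
lemma sq_norm_le_mul_of_verticalStrip {E : Type*} [NormedAddCommGroup E] [NormedSpace ℂ E]
    {F : ℂ → E} {a b : ℝ} (hF : Differentiable ℂ F)
    (hB : BddAbove ((norm ∘ F) '' verticalClosedStrip (-1) 1))
    (ha : ∀ z : ℂ, z.re = -1 → ‖F z‖ ≤ a) (hb : ∀ z : ℂ, z.re = 1 → ‖F z‖ ≤ b) :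
    ‖F 0‖ ^ 2 ≤ a * b := by
  have h := norm_le_interp_of_mem_verticalClosedStrip' (z := 0) (by norm_num)
    (by simp [verticalClosedStrip])
    hF.diffContOnCl hB ha hb
  have ha0 : 0 ≤ a := (norm_nonneg _).trans (ha (-1) (by simp))
  have hb0 : 0 ≤ b := (norm_nonneg _).trans (hb 1 (by simp))
  norm_num [← Real.sqrt_eq_rpow] at h
  calc ‖F 0‖ ^ 2 ≤ (√a * √b) ^ 2 := by gcongr
    _ = a * b := by rw [mul_pow, Real.sq_sqrt ha0, Real.sq_sqrt hb0]

lemma ContinuousLinearMap.sq_opNorm_le_of_sq_norm_apply_le {𝕜 E F : Type*}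
    [NontriviallyNormedField 𝕜] [NormedAddCommGroup E] [NormedSpace 𝕜 E] [NormedAddCommGroup F] [NormedSpace 𝕜 F]
    (A : E →L[𝕜] F) {c : ℝ} (hc : 0 ≤ c) (h : ∀ f, ‖A f‖ ^ 2 ≤ c * ‖f‖ ^ 2) : ‖A‖ ^ 2 ≤ c := by
  have hA : ‖A‖ ≤ √c := A.opNorm_le_bound (Real.sqrt_nonneg c) fun f => by
    rw [← pow_le_pow_iff_left₀ (norm_nonneg _) (by positivity) two_ne_zero, mul_pow,
      Real.sq_sqrt hc]
    exact h f
  calc ‖A‖ ^ 2 ≤ √c ^ 2 := by gcongr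
    _ = c := Real.sq_sqrt hc

section Lp

variable {X : Type*} [MeasurableSpace X] {μ : Measure X} {p : ℝ≥0∞}

lemma aestronglyMeasurable_of_forall_aestronglyMeasurable_mul [SigmaFinite μ] {𝕜 : Type*}
    [NormedRing 𝕜] {d : X → 𝕜} (h : ∀ f : Lp 𝕜 p μ, AEStronglyMeasurable (fun x => d x * f x) μ) :
    AEStronglyMeasurable d μ := by
  rw [← Measure.restrict_univ (μ := μ), ← iUnion_spanningSets μ, aestronglyMeasurable_iUnion_iff]
  intro n
  have hS := measurableSet_spanningSets μ n
  let χ : Lp 𝕜 p μ := indicatorConstLp p hS (measure_spanningSets_lt_top μ n).ne (1 : 𝕜)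
  have hχ : (χ : X → 𝕜) =ᵐ[μ] (spanningSets μ n).indicator fun _ => 1 := indicatorConstLp_coeFn
  refine (h χ).restrict.congr ?_
  filter_upwards [ae_restrict_mem hS, ae_restrict_of_ae hχ] with x hx hχ
  rw [hχ, Set.indicator_of_mem hx, mul_one]

variable {ψ : X → ℝ} {Λ : ℝ}

lemma memLp_cexp_mul_mul (hψ : AEStronglyMeasurable ψ μ) (hψΛ : ∀ᵐ x ∂μ, |ψ x| ≤ Λ) (z : ℂ)
    (f : Lp ℂ p μ) : MemLp (fun x => cexp (z * ψ x) * f x) p μ := by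
  refine (Lp.memLp f).of_le_mul (c := Real.exp (|z.re| * Λ)) ?_ ?_
  · exact (Complex.continuous_exp.comp_aestronglyMeasurable
      ((Complex.continuous_ofReal.comp_aestronglyMeasurable hψ).const_mul z)).mul
      (Lp.aestronglyMeasurable f)
  · filter_upwards [hψΛ] with x hx
    rw [norm_mul]
    exact mul_le_mul_of_nonneg_right (norm_cexp_mul_ofReal_le hx) (norm_nonneg _)

lemma norm_le_of_ae_eq_cexp_mul (hψΛ : ∀ᵐ x ∂μ, |ψ x| ≤ Λ) {z : ℂ} {f g : Lp ℂ p μ}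
    (hg : g =ᵐ[μ] fun x => cexp (z * ψ x) * f x) : ‖g‖ ≤ Real.exp (|z.re| * Λ) * ‖f‖ := by
  refine Lp.norm_le_mul_norm_of_ae_le_mul ?_
  filter_upwards [hg, hψΛ] with x hgx hx
  rw [hgx, norm_mul]
  exact mul_le_mul_of_nonneg_right (norm_cexp_mul_ofReal_le hx) (norm_nonneg _)

variable [Fact (1 ≤ p)] {E : Type*} [NormedAddCommGroup E] [NormedSpace ℂ E]

theorem exists_differentiable_ae_eq_cexp_mul (hψ : AEStronglyMeasurable ψ μ)
    (hψΛ : ∀ᵐ x ∂μ, |ψ x| ≤ Λ) (f : Lp ℂ p μ) :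
    ∃ T : ℂ → Lp ℂ p μ, Differentiable ℂ T ∧ ∀ z, T z =ᵐ[μ] fun x => cexp (z * ψ x) * f x := by
  have hmem (z : ℂ) := memLp_cexp_mul_mul hψ hψΛ z f
  let T z := (hmem z).toLp
  have hT (z : ℂ) : (T z : X → ℂ) =ᵐ[μ] fun x => cexp (z * ψ x) * f x := (hmem z).coeFn_toLp
  have hmem' (z : ℂ) : MemLp (fun x => ψ x * (cexp (z * ψ x) * f x)) p μ :=
    (hmem z).of_le_mul (c := Λ)
      ((Complex.continuous_ofReal.comp_aestronglyMeasurable hψ).mul (hmem z).1)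
      (by filter_upwards [hψΛ] with x hx
          rw [norm_mul, norm_real, Real.norm_eq_abs]
          exact mul_le_mul_of_nonneg_right hx (norm_nonneg _))
  refine ⟨T, fun z => (?_ : HasDerivAt T (hmem' z).toLp z).differentiableAt, hT⟩
  refine hasDerivAt_of_norm_sub_le_sq (Real.exp (|z.re| * Λ) * Λ ^ 2 * ‖f‖) ?_
  have hnear : ∀ᶠ w in 𝓝 z, Λ * ‖w - z‖ < 1 :=
    (isOpen_lt (by fun_prop) continuous_const).mem_nhds (by simp)
  filter_upwards [hnear] with w hw
  rw [mul_right_comm]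
  refine Lp.norm_le_mul_norm_of_ae_le_mul ?_
  filter_upwards [Lp.coeFn_sub (T w - T z) ((w - z) • (hmem' z).toLp), Lp.coeFn_sub (T w) (T z),
    Lp.coeFn_smul (w - z) (hmem' z).toLp, hT w, hT z,
    (hmem' z).coeFn_toLp, hψΛ] with x h₁ h₂ h₃ h₄ h₅ h₆ hx
  simp only [h₁, Pi.sub_apply, h₂, h₃, Pi.smul_apply, h₄, h₅, h₆, smul_eq_mul]
  have hclose : |ψ x| * ‖w - z‖ ≤ Λ * ‖w - z‖ := mul_le_mul_of_nonneg_right hx (norm_nonneg _)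
  calc _ = ‖cexp (w * ψ x) - cexp (z * ψ x) - (w - z) * (ψ x * cexp (z * ψ x))‖ * ‖f x‖ := by
        rw [← norm_mul]; congr 1; ring
    _ ≤ Real.exp (|z.re| * Λ) * (Λ * ‖w - z‖) ^ 2 * ‖f x‖ := by
        gcongr
        refine (norm_cexp_mul_ofReal_sub_sub_le (hclose.trans hw.le)).trans ?_
        gcongr
        · exact norm_cexp_mul_ofReal_le hx
    _ = _ := by ring

lemma norm_apply_le_of_ae_eq_mul_cexp_mul_I (A : Lp ℂ p μ →L[ℂ] E)
    (M : Lp ℂ p μ →L[ℂ] Lp ℂ p μ)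
    {m : X → ℂ} (hM : ∀ h : Lp ℂ p μ, (M h : X → ℂ) =ᵐ[μ] fun x => m x * h x) {θ : X → ℝ}
    (hθ : AEStronglyMeasurable θ μ) {f g : Lp ℂ p μ}
    (hg : g =ᵐ[μ] fun x => m x * (cexp (θ x * I) * f x)) : ‖A g‖ ≤ ‖A.comp M‖ * ‖f‖ := by
  have hmem : MemLp (fun x => cexp (θ x * I) * f x) p μ :=
    (Lp.memLp f).of_le_mul (c := 1)
      ((Complex.continuous_exp.comp_aestronglyMeasurable
        ((Complex.continuous_ofReal.comp_aestronglyMeasurable hθ).mul_const I)).mul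
        (Lp.aestronglyMeasurable f))
      (ae_of_all _ fun x => by rw [norm_mul, norm_exp_ofReal_mul_I])
  have hgM : g = M hmem.toLp := Lp.ext <| by
    filter_upwards [hg, hM hmem.toLp, hmem.coeFn_toLp] with x hgx hMx hx
    rw [hgx, hMx, hx]
  have hnorm : ‖hmem.toLp‖ = ‖f‖ := by
    refine le_antisymm (Lp.norm_le_norm_of_ae_le ?_) (Lp.norm_le_norm_of_ae_le ?_) <;>
      filter_upwards [hmem.coeFn_toLp] with x hx <;>
      rw [hx, norm_mul, norm_exp_ofReal_mul_I, one_mul]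
  calc ‖A g‖ = ‖A.comp M hmem.toLp‖ := by rw [hgM, A.comp_apply]
    _ ≤ ‖A.comp M‖ * ‖f‖ := hnorm ▸ (A.comp M).le_opNorm hmem.toLp

theorem sq_norm_apply_le_of_norm_apply_cexp_mul_le (A : Lp ℂ p μ →L[ℂ] E)
    (hψ : AEStronglyMeasurable ψ μ) (hψΛ : ∀ᵐ x ∂μ, |ψ x| ≤ Λ) (f : Lp ℂ p μ) {a b : ℝ}
    (ha : ∀ (z : ℂ) (g : Lp ℂ p μ), z.re = -1 →
      g =ᵐ[μ] (fun x => cexp (z * ψ x) * f x) → ‖A g‖ ≤ a)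
    (hb : ∀ (z : ℂ) (g : Lp ℂ p μ), z.re = 1 →
      g =ᵐ[μ] (fun x => cexp (z * ψ x) * f x) → ‖A g‖ ≤ b) :
    ‖A f‖ ^ 2 ≤ a * b := by
  obtain ⟨T, hTdiff, hT⟩ := exists_differentiable_ae_eq_cexp_mul hψ hψΛ f
  have hT0 : T 0 = f := Lp.ext <| (hT 0).trans <| ae_of_all _ fun x => by simp
  have hB : BddAbove
      ((norm ∘ fun z => A (T z)) '' HadamardThreeLines.verticalClosedStrip (-1) 1) := by
    refine ⟨‖A‖ * (Real.exp |Λ| * ‖f‖), ?_⟩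
    rintro _ ⟨z, hz, rfl⟩
    have hzΛ : |z.re| * Λ ≤ |Λ| :=
      (mul_le_mul_of_nonneg_left (le_abs_self Λ) (abs_nonneg _)).trans
        (mul_le_of_le_one_left (abs_nonneg Λ) (abs_le.2 hz))
    calc ‖A (T z)‖ ≤ ‖A‖ * (Real.exp (|z.re| * Λ) * ‖f‖) :=
          A.le_opNorm_of_le (norm_le_of_ae_eq_cexp_mul hψΛ (hT z))
      _ ≤ ‖A‖ * (Real.exp |Λ| * ‖f‖) := by gcongr
  simpa [hT0] using sq_norm_le_mul_of_verticalStrip (A.differentiable.comp hTdiff) hB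
    (fun z hz => ha z (T z) hz (hT z)) (fun z hz => hb z (T z) hz (hT z))

end Lp

lemma abs_log_le_max_abs_log {ε r C : ℝ} (hε : 0 < ε) (hεr : ε ≤ r) (hrC : r ≤ C) :
    |Real.log r| ≤ max |Real.log ε| |Real.log C| := by
  have hlo := Real.log_le_log hε hεr
  have hhi := Real.log_le_log (hε.trans_le hεr) hrC
  rw [abs_le]
  constructor
  · linarith [neg_abs_le (Real.log ε), le_max_left |Real.log ε| |Real.log C|]
  · linarith [le_abs_self (Real.log C), le_max_right |Real.log ε| |Real.log C|]

theorem sq_norm_le_norm_mul_right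
    {X : Type*} [MeasurableSpace X] (μ : Measure X) [SigmaFinite μ]
    (p : ℝ≥0∞) [Fact (1 ≤ p)]
    (D Dinv : Lp ℂ p μ →L[ℂ] Lp ℂ p μ) (d : X → ℂ)
    (hbdd : ∃ C, ∀ᵐ x ∂μ, ‖d x‖ ≤ C)
    (hbelow : ∃ ε > (0 : ℝ), ∀ᵐ x ∂μ, ε ≤ ‖d x‖)
    (hD : ∀ f : Lp ℂ p μ, (D f : X → ℂ) =ᵐ[μ] fun x => d x * f x)
    (hDinv : ∀ f : Lp ℂ p μ, (Dinv f : X → ℂ) =ᵐ[μ] fun x => (d x)⁻¹ * f x)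
    (A : Lp ℂ p μ →L[ℂ] Lp ℂ p μ) :
    ‖A‖ ^ 2 ≤ ‖A.comp D‖ * ‖A.comp Dinv‖ := by
  obtain ⟨C, hC⟩ := hbdd
  obtain ⟨ε, hε, hεd⟩ := hbelow
  have hd : AEStronglyMeasurable d μ := aestronglyMeasurable_of_forall_aestronglyMeasurable_mul
    fun f => (Lp.aestronglyMeasurable (D f)).congr (hD f)
  set ψ : X → ℝ := fun x => Real.log ‖d x‖
  have hψ : AEStronglyMeasurable ψ μ :=
    (Real.measurable_log.comp_aemeasurable hd.aemeasurable.norm).aestronglyMeasurable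
  have hψΛ : ∀ᵐ x ∂μ, |ψ x| ≤ max |Real.log ε| |Real.log C| := by
    filter_upwards [hεd, hC] with x h₁ h₂ using abs_log_le_max_abs_log hε h₁ h₂
  have hθ (t s : ℝ) : AEStronglyMeasurable (fun x => t * ψ x - s * arg (d x)) μ :=
    (hψ.const_mul t).sub
      ((measurable_arg.comp_aemeasurable hd.aemeasurable).aestronglyMeasurable.const_mul s)
  refine A.sq_opNorm_le_of_sq_norm_apply_le (by positivity) fun f => ?_
  have hd0 : ∀ᵐ x ∂μ, d x ≠ 0 := hεd.mono fun x hx h0 => by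
    rw [h0, norm_zero] at hx; linarith
  calc ‖A f‖ ^ 2 ≤ (‖A.comp Dinv‖ * ‖f‖) * (‖A.comp D‖ * ‖f‖) := by
        refine sq_norm_apply_le_of_norm_apply_cexp_mul_le A hψ hψΛ f
          (fun z g hz hg => norm_apply_le_of_ae_eq_mul_cexp_mul_I A Dinv hDinv (hθ z.im z.re) ?_)
          (fun z g hz hg => norm_apply_le_of_ae_eq_mul_cexp_mul_I A D hD (hθ z.im z.re) ?_)
        · filter_upwards [hg, hd0] with x hx hx0
          rw [hx, ← mul_assoc, cexp_mul_log_norm, hz, Complex.ofReal_neg, Complex.ofReal_one,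
            neg_one_mul, exp_neg, exp_log hx0]
        · filter_upwards [hg, hd0] with x hx hx0
          rw [hx, ← mul_assoc, cexp_mul_log_norm, hz, Complex.ofReal_one, one_mul, exp_log hx0]
    _ = ‖A.comp D‖ * ‖A.comp Dinv‖ * ‖f‖ ^ 2 := by ring
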